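/- Let V be a (G_Γ, β, γ0)-vertex coalgebra as in the context. Then for every v ∈ Ker Ŷ_{−2}: (i) Ŷ_{−1}(v) lies in the image of the canonical map (Ker Ŷ_{−2}) ⊗ (Ker Ŷ_{−2}) → V ⊗ V; (ii) under the canonical isomorphism (V⊗V)⊗V ≅ V⊗(V⊗V), (Ŷ_{−1} ⊗ id_V)(Ŷ_{−1}(v)) = (id_V ⊗ Ŷ_{−1})(Ŷ_{−1}(v)); (iii) T^β(Ŷ_{−1}(v)) = Ŷ_{−1}(v). Consequently Ker Ŷ_{−2}, with comultiplication the restriction of Ŷ_{−1} and counit the restriction of ε, is a β-cocommutative coassociative counital coalgebra (the C₂-coalgebra of V). -/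
import Mathlib


open TensorProduct

/-- The generalized binomial coefficient `binom(a, i) = a(a-1)⋯(a-i+1)/i!`
for `a : ℤ`, `i : ℕ`; it is an integer. -/
def zbinom (a : ℤ) (i : ℕ) : ℤ :=
  if 0 ≤ a then (a.toNat.choose i : ℤ)
  else (-1 : ℤ) ^ i * ((((i : ℤ) - a - 1).toNat).choose i : ℤ)

/-- The degree-`δ` component of `V ⊗ V` for a `Γ`-graded space
`V = ⊕ Vg γ`: the span of the pure tensors `u ⊗ v` with `u ∈ Vg γ1`,
`v ∈ Vg γ2` and `γ1 + γ2 = δ`. -/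
def tensorDeg {k Γ V : Type*} [Field k] [AddCommGroup Γ]
    [AddCommGroup V] [Module k V] (Vg : Γ → Submodule k V) (δ : Γ) :
    Submodule k (V ⊗[k] V) :=
  Submodule.span k {x : V ⊗[k] V | ∃ (γ1 γ2 : Γ) (u v : V),
    u ∈ Vg γ1 ∧ v ∈ Vg γ2 ∧ γ1 + γ2 = δ ∧ u ⊗ₜ[k] v = x}

/-- A `(G_Γ, β, γ0)`-vertex coalgebra in component form: a `Γ`-graded
`k`-vector space `V` (internal direct sum of the `Vg γ`), linear
coproducts `Yc n : V → V ⊗ V` of degree `n • γ0`, a covacuum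
`ε : V → k` vanishing outside degree `0`, and the twist
`T^β(u ⊗ v) = β(γ1, γ2) • (v ⊗ u)` on homogeneous tensors, satisfying
truncation, covacuum, cocreation, the `β`-co-Jacobi identity and the
coderivation properties of `D̂ = (ε ⊗ id)∘Ŷ_{-2}` (via `k ⊗ V ≅ V`). -/
structure VCoalg (k : Type*) [Field k] (Γ : Type*) [AddCommGroup Γ]
    [DecidableEq Γ] (γ0 : Γ) (β : Γ → Γ → k)
    (V : Type*) [AddCommGroup V] [Module k V] where
  Vg : Γ → Submodule k V
  internal : DirectSum.IsInternal Vg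
  Yc : ℤ → V →ₗ[k] V ⊗[k] V
  eps : V →ₗ[k] k
  T : V ⊗[k] V →ₗ[k] V ⊗[k] V
  grading : ∀ (n : ℤ) (γ : Γ) (v : V), v ∈ Vg γ →
      Yc n v ∈ tensorDeg Vg (γ + n • γ0)
  eps_grading : ∀ (γ : Γ), γ ≠ 0 → ∀ v ∈ Vg γ, eps v = 0
  T_apply : ∀ (γ1 γ2 : Γ) (u v : V), u ∈ Vg γ1 → v ∈ Vg γ2 →
      T (u ⊗ₜ[k] v) = β γ1 γ2 • (v ⊗ₜ[k] u)
  truncation : ∀ v : V, ∃ N : ℤ, ∀ n : ℤ, N ≤ n → Yc n v = 0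
  covacuum : ∀ v : V,
      (TensorProduct.rid k V)
        (TensorProduct.map (LinearMap.id : V →ₗ[k] V) eps (Yc (-1) v)) = v
  covacuum' : ∀ n : ℤ, n ≠ -1 → ∀ v : V,
      (TensorProduct.rid k V)
        (TensorProduct.map (LinearMap.id : V →ₗ[k] V) eps (Yc n v)) = 0
  cocreation : ∀ v : V,
      (TensorProduct.lid k V)
        (TensorProduct.map eps (LinearMap.id : V →ₗ[k] V) (Yc (-1) v)) = v
  cocreation' : ∀ n : ℤ, 0 ≤ n → ∀ v : V,
      (TensorProduct.lid k V)
        (TensorProduct.map eps (LinearMap.id : V →ₗ[k] V) (Yc n v)) = 0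
  coJacobi : ∀ (l m n : ℤ) (v : V),
      (∑ᶠ i : ℕ, (((-1 : k) ^ i * (zbinom l i : k)) •
          (TensorProduct.assoc k V V V)
            (TensorProduct.map (Yc (n + (i : ℤ)))
              (LinearMap.id : V →ₗ[k] V) (Yc (m + l - (i : ℤ)) v))))
        - (-1 : k) ^ l •
            (∑ᶠ i : ℕ, (((-1 : k) ^ i * (zbinom l i : k)) •
              TensorProduct.map (LinearMap.id : V →ₗ[k] V) T
                ((TensorProduct.assoc k V V V)
                  (TensorProduct.map (Yc (m + (i : ℤ)))
                    (LinearMap.id : V →ₗ[k] V) (Yc (n + l - (i : ℤ)) v)))))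
        = ∑ᶠ i : ℕ, ((zbinom m i : k) •
            TensorProduct.map (LinearMap.id : V →ₗ[k] V) (Yc (l + (i : ℤ)))
              (Yc (m + n - (i : ℤ)) v))
  coderiv1 : ∀ (n : ℤ) (v : V),
      Yc n ((TensorProduct.lid k V)
          (TensorProduct.map eps (LinearMap.id : V →ₗ[k] V) (Yc (-2) v)))
        - TensorProduct.map
            ((TensorProduct.lid k V).toLinearMap ∘ₗ
              TensorProduct.map eps (LinearMap.id : V →ₗ[k] V) ∘ₗ Yc (-2))
            (LinearMap.id : V →ₗ[k] V) (Yc n v)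
        = (-n) • Yc (n - 1) v
  coderiv2 : ∀ (n : ℤ) (v : V),
      TensorProduct.map (LinearMap.id : V →ₗ[k] V)
          ((TensorProduct.lid k V).toLinearMap ∘ₗ
            TensorProduct.map eps (LinearMap.id : V →ₗ[k] V) ∘ₗ Yc (-2))
          (Yc n v)
        = (-n) • Yc (n - 1) v

/-- for a `(G_Γ, β, γ0)`-vertex coalgebra `V` and every
`v ∈ Ker Ŷ_{-2}`:
(i) `Ŷ_{-1}(v)` lies in the image of
`(Ker Ŷ_{-2}) ⊗ (Ker Ŷ_{-2}) → V ⊗ V`;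
(ii) `(Ŷ_{-1} ⊗ id)(Ŷ_{-1}(v)) = (id ⊗ Ŷ_{-1})(Ŷ_{-1}(v))` (via the
associativity isomorphism);
(iii) `T^β(Ŷ_{-1}(v)) = Ŷ_{-1}(v)`.
Consequently `Ker Ŷ_{-2}`, with comultiplication the restriction of `Ŷ_{-1}`
and counit the restriction of `ε`, is a `β`-cocommutative coassociative
counital coalgebra (the `C₂`-coalgebra of `V`). -/
theorem statement18 {k Γ V : Type*} [Field k] [CharZero k] [AddCommGroup Γ]
    [DecidableEq Γ] [AddCommGroup V] [Module k V]
    (γ0 : Γ) (β : Γ → Γ → k) (A : VCoalg k Γ γ0 β V) :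
    ∀ v : V, A.Yc (-2) v = 0 →
      (A.Yc (-1) v ∈ LinearMap.range
          (TensorProduct.map (LinearMap.ker (A.Yc (-2))).subtype
            (LinearMap.ker (A.Yc (-2))).subtype)) ∧
      ((TensorProduct.assoc k V V V)
          (TensorProduct.map (A.Yc (-1)) (LinearMap.id : V →ₗ[k] V)
            (A.Yc (-1) v))
        = TensorProduct.map (LinearMap.id : V →ₗ[k] V) (A.Yc (-1))
            (A.Yc (-1) v)) ∧
      (A.T (A.Yc (-1) v) = A.Yc (-1) v) := by
  intro v hv
  classical
  -- Step 1: Yc m v = 0 for all m ≤ -2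
  have hKnat : ∀ n : ℕ, A.Yc (-2 - (n : ℤ)) v = 0 := by
    intro n
    induction n with
    | zero => simpa using hv
    | succ m ih =>
      have h1 := A.coderiv1 (-2 - (m : ℤ)) v
      rw [hv, ih] at h1
      simp only [map_zero, sub_zero, zero_sub, neg_zero] at h1
      have h2 : ((((2 : ℤ) + m : ℤ) : k)) • A.Yc (-2 - (m : ℤ) - 1) v = 0 := by
        rw [Int.cast_smul_eq_zsmul]
        have he : -(-2 - (m : ℤ)) = (2 : ℤ) + m := by ring
        rw [he] at h1
        exact h1.symm
      have h3 : (((2 : ℤ) + m : ℤ) : k) ≠ 0 := by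
        exact_mod_cast (by positivity : ((2 : ℤ) + m : ℤ) ≠ 0)
      have h4 := (smul_eq_zero.mp h2).resolve_left h3
      have he2 : (-2 - ((m + 1 : ℕ) : ℤ)) = -2 - (m : ℤ) - 1 := by push_cast; ring
      rw [he2]
      exact h4
  have hK : ∀ m : ℤ, m ≤ -2 → A.Yc m v = 0 := by
    intro m hm
    have := hKnat (-2 - m).toNat
    rwa [show (-2 - (((-2 - m).toNat : ℕ) : ℤ)) = m by omega] at this
  -- (ii) associativity, from coJacobi with l = -1, m = 0, n = -1
  have hii : (TensorProduct.assoc k V V V)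
        (TensorProduct.map (A.Yc (-1)) (LinearMap.id : V →ₗ[k] V) (A.Yc (-1) v))
      = TensorProduct.map (LinearMap.id : V →ₗ[k] V) (A.Yc (-1)) (A.Yc (-1) v) := by
    have hJ := A.coJacobi (-1) 0 (-1) v
    have SA : (∑ᶠ i : ℕ, (((-1 : k) ^ i * (zbinom (-1) i : k)) •
          (TensorProduct.assoc k V V V)
            (TensorProduct.map (A.Yc (-1 + (i : ℤ)))
              (LinearMap.id : V →ₗ[k] V) (A.Yc (0 + -1 - (i : ℤ)) v))))
        = (TensorProduct.assoc k V V V)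
            (TensorProduct.map (A.Yc (-1)) (LinearMap.id : V →ₗ[k] V)
              (A.Yc (-1) v)) := by
      rw [finsum_eq_single _ 0]
      · norm_num [zbinom]
      · intro i hi
        rw [hK (0 + -1 - (i : ℤ)) (by omega)]
        simp
    have SB : (∑ᶠ i : ℕ, (((-1 : k) ^ i * (zbinom (-1) i : k)) •
          TensorProduct.map (LinearMap.id : V →ₗ[k] V) A.T
            ((TensorProduct.assoc k V V V)
              (TensorProduct.map (A.Yc (0 + (i : ℤ)))
                (LinearMap.id : V →ₗ[k] V) (A.Yc (-1 + -1 - (i : ℤ)) v)))))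
        = 0 := by
      apply finsum_eq_zero_of_forall_eq_zero
      intro i
      rw [hK (-1 + -1 - (i : ℤ)) (by omega)]
      simp
    have SC : (∑ᶠ i : ℕ, ((zbinom 0 i : k) •
          TensorProduct.map (LinearMap.id : V →ₗ[k] V) (A.Yc (-1 + (i : ℤ)))
            (A.Yc (0 + -1 - (i : ℤ)) v)))
        = TensorProduct.map (LinearMap.id : V →ₗ[k] V) (A.Yc (-1))
            (A.Yc (-1) v) := by
      rw [finsum_eq_single _ 0]
      · norm_num [zbinom]
      · intro i hi
        rw [hK (0 + -1 - (i : ℤ)) (by omega)]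
        simp
    rw [SA, SB, SC, smul_zero, sub_zero] at hJ
    exact hJ
  -- the map L = (lid) ∘ (eps ⊗ id) on V ⊗ (V ⊗ V), and E on V ⊗ V
  set E : V ⊗[k] V →ₗ[k] V :=
    (TensorProduct.lid k V).toLinearMap ∘ₗ
      TensorProduct.map A.eps (LinearMap.id : V →ₗ[k] V) with hE
  set L : V ⊗[k] (V ⊗[k] V) →ₗ[k] V ⊗[k] V :=
    (TensorProduct.lid k (V ⊗[k] V)).toLinearMap ∘ₗ
      TensorProduct.map A.eps (LinearMap.id : V ⊗[k] V →ₗ[k] V ⊗[k] V) with hL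
  have hEop : E ∘ₗ A.Yc (-1) = LinearMap.id := by
    apply LinearMap.ext
    intro w
    simpa [hE] using A.cocreation w
  have hLassoc : L ∘ₗ (TensorProduct.assoc k V V V).toLinearMap
      = TensorProduct.map E (LinearMap.id : V →ₗ[k] V) := by
    apply TensorProduct.ext'
    intro t c
    refine t.induction_on ?_ ?_ ?_
    · simp
    · intro a b
      simp [hL, hE, TensorProduct.smul_tmul']
    · intro y z hy hz
      simp only [add_tmul, map_add, hy, hz]
  have hL1 : ∀ y : V ⊗[k] V,
      L ((TensorProduct.assoc k V V V)
        (TensorProduct.map (A.Yc (-1)) (LinearMap.id : V →ₗ[k] V) y)) = y := by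
    intro y
    have h1 := LinearMap.congr_fun hLassoc
      (TensorProduct.map (A.Yc (-1)) (LinearMap.id : V →ₗ[k] V) y)
    simp only [LinearMap.comp_apply, LinearEquiv.coe_coe] at h1
    rw [h1, ← LinearMap.comp_apply, ← TensorProduct.map_comp, hEop,
      LinearMap.id_comp, TensorProduct.map_id, LinearMap.id_apply]
  have hL2 : ∀ z : V ⊗[k] (V ⊗[k] V),
      L (TensorProduct.map (LinearMap.id : V →ₗ[k] V) A.T z) = A.T (L z) := by
    intro z
    refine z.induction_on ?_ ?_ ?_
    · simp
    · intro a t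
      simp [hL]
    · intro y w hy hw
      simp only [map_add, hy, hw]
  -- (iii) cocommutativity, from coJacobi with l = 0, m = -1, n = -1
  have hiii : A.T (A.Yc (-1) v) = A.Yc (-1) v := by
    have hJ := A.coJacobi 0 (-1) (-1) v
    have SA : (∑ᶠ i : ℕ, (((-1 : k) ^ i * (zbinom 0 i : k)) •
          (TensorProduct.assoc k V V V)
            (TensorProduct.map (A.Yc (-1 + (i : ℤ)))
              (LinearMap.id : V →ₗ[k] V) (A.Yc (-1 + 0 - (i : ℤ)) v))))
        = (TensorProduct.assoc k V V V)
            (TensorProduct.map (A.Yc (-1)) (LinearMap.id : V →ₗ[k] V)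
              (A.Yc (-1) v)) := by
      rw [finsum_eq_single _ 0]
      · norm_num [zbinom]
      · intro i hi
        have hz : zbinom 0 i = 0 := by
          simp [zbinom, Nat.choose_eq_zero_of_lt (Nat.pos_of_ne_zero hi)]
        simp [hz]
    have SB : (∑ᶠ i : ℕ, (((-1 : k) ^ i * (zbinom 0 i : k)) •
          TensorProduct.map (LinearMap.id : V →ₗ[k] V) A.T
            ((TensorProduct.assoc k V V V)
              (TensorProduct.map (A.Yc (-1 + (i : ℤ)))
                (LinearMap.id : V →ₗ[k] V) (A.Yc (-1 + 0 - (i : ℤ)) v)))))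
        = TensorProduct.map (LinearMap.id : V →ₗ[k] V) A.T
            ((TensorProduct.assoc k V V V)
              (TensorProduct.map (A.Yc (-1)) (LinearMap.id : V →ₗ[k] V)
                (A.Yc (-1) v))) := by
      rw [finsum_eq_single _ 0]
      · norm_num [zbinom]
      · intro i hi
        have hz : zbinom 0 i = 0 := by
          simp [zbinom, Nat.choose_eq_zero_of_lt (Nat.pos_of_ne_zero hi)]
        simp [hz]
    have SC : (∑ᶠ i : ℕ, ((zbinom (-1) i : k) •
          TensorProduct.map (LinearMap.id : V →ₗ[k] V) (A.Yc (0 + (i : ℤ)))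
            (A.Yc (-1 + -1 - (i : ℤ)) v)))
        = 0 := by
      apply finsum_eq_zero_of_forall_eq_zero
      intro i
      rw [hK (-1 + -1 - (i : ℤ)) (by omega)]
      simp
    rw [SA, SB, SC, zpow_zero, one_smul, sub_eq_zero] at hJ
    have h1 := congrArg L hJ
    rw [hL1, hL2, hL1] at h1
    exact h1.symm
  -- (Yc (-2) ⊗ id) (Yc (-1) v) = 0, from coJacobi l = 0, m = -1, n = -2
  have hR : TensorProduct.map (A.Yc (-2)) (LinearMap.id : V →ₗ[k] V)
      (A.Yc (-1) v) = 0 := by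
    have hJ := A.coJacobi 0 (-1) (-2) v
    have SA : (∑ᶠ i : ℕ, (((-1 : k) ^ i * (zbinom 0 i : k)) •
          (TensorProduct.assoc k V V V)
            (TensorProduct.map (A.Yc (-2 + (i : ℤ)))
              (LinearMap.id : V →ₗ[k] V) (A.Yc (-1 + 0 - (i : ℤ)) v))))
        = (TensorProduct.assoc k V V V)
            (TensorProduct.map (A.Yc (-2)) (LinearMap.id : V →ₗ[k] V)
              (A.Yc (-1) v)) := by
      rw [finsum_eq_single _ 0]
      · norm_num [zbinom]
      · intro i hi
        have hz : zbinom 0 i = 0 := by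
          simp [zbinom, Nat.choose_eq_zero_of_lt (Nat.pos_of_ne_zero hi)]
        simp [hz]
    have SB : (∑ᶠ i : ℕ, (((-1 : k) ^ i * (zbinom 0 i : k)) •
          TensorProduct.map (LinearMap.id : V →ₗ[k] V) A.T
            ((TensorProduct.assoc k V V V)
              (TensorProduct.map (A.Yc (-1 + (i : ℤ)))
                (LinearMap.id : V →ₗ[k] V) (A.Yc (-2 + 0 - (i : ℤ)) v)))))
        = 0 := by
      apply finsum_eq_zero_of_forall_eq_zero
      intro i
      rw [hK (-2 + 0 - (i : ℤ)) (by omega)]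
      simp
    have SC : (∑ᶠ i : ℕ, ((zbinom (-1) i : k) •
          TensorProduct.map (LinearMap.id : V →ₗ[k] V) (A.Yc (0 + (i : ℤ)))
            (A.Yc (-1 + -2 - (i : ℤ)) v)))
        = 0 := by
      apply finsum_eq_zero_of_forall_eq_zero
      intro i
      rw [hK (-1 + -2 - (i : ℤ)) (by omega)]
      simp
    rw [SA, SB, SC, smul_zero, sub_zero] at hJ
    exact (LinearEquiv.map_eq_zero_iff _).mp hJ
  -- (id ⊗ Yc (-2)) (Yc (-1) v) = 0, from coJacobi l = -2, m = 0, n = -1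
  have hL0 : TensorProduct.map (LinearMap.id : V →ₗ[k] V) (A.Yc (-2))
      (A.Yc (-1) v) = 0 := by
    have hJ := A.coJacobi (-2) 0 (-1) v
    have SA : (∑ᶠ i : ℕ, (((-1 : k) ^ i * (zbinom (-2) i : k)) •
          (TensorProduct.assoc k V V V)
            (TensorProduct.map (A.Yc (-1 + (i : ℤ)))
              (LinearMap.id : V →ₗ[k] V) (A.Yc (0 + -2 - (i : ℤ)) v))))
        = 0 := by
      apply finsum_eq_zero_of_forall_eq_zero
      intro i
      rw [hK (0 + -2 - (i : ℤ)) (by omega)]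
      simp
    have SB : (∑ᶠ i : ℕ, (((-1 : k) ^ i * (zbinom (-2) i : k)) •
          TensorProduct.map (LinearMap.id : V →ₗ[k] V) A.T
            ((TensorProduct.assoc k V V V)
              (TensorProduct.map (A.Yc (0 + (i : ℤ)))
                (LinearMap.id : V →ₗ[k] V) (A.Yc (-1 + -2 - (i : ℤ)) v)))))
        = 0 := by
      apply finsum_eq_zero_of_forall_eq_zero
      intro i
      rw [hK (-1 + -2 - (i : ℤ)) (by omega)]
      simp
    have SC : (∑ᶠ i : ℕ, ((zbinom 0 i : k) •
          TensorProduct.map (LinearMap.id : V →ₗ[k] V) (A.Yc (-2 + (i : ℤ)))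
            (A.Yc (0 + -1 - (i : ℤ)) v)))
        = TensorProduct.map (LinearMap.id : V →ₗ[k] V) (A.Yc (-2))
            (A.Yc (-1) v) := by
      rw [finsum_eq_single _ 0]
      · norm_num [zbinom]
      · intro i hi
        have hz : zbinom 0 i = 0 := by
          simp [zbinom, Nat.choose_eq_zero_of_lt (Nat.pos_of_ne_zero hi)]
        simp [hz]
    rw [SA, SB, SC, smul_zero, sub_zero] at hJ
    exact hJ.symm
  -- (i) from flatness/exactness
  have hi : A.Yc (-1) v ∈ LinearMap.range
      (TensorProduct.map (LinearMap.ker (A.Yc (-2))).subtype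
        (LinearMap.ker (A.Yc (-2))).subtype) := by
    set P := LinearMap.ker (A.Yc (-2)) with hP
    have hEx1 : Function.Exact (P.subtype.rTensor V) ((A.Yc (-2)).rTensor V) :=
      Module.Flat.rTensor_exact V (LinearMap.exact_subtype_ker_map (A.Yc (-2)))
    have hx1 : (A.Yc (-2)).rTensor V (A.Yc (-1) v) = 0 := hR
    obtain ⟨y, hy⟩ := (hEx1 (A.Yc (-1) v)).mp hx1
    have hy' : TensorProduct.map P.subtype (LinearMap.id : V →ₗ[k] V) y
        = A.Yc (-1) v := hy
    have hinj : Function.Injective (P.subtype.rTensor (V ⊗[k] V)) :=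
      Module.Flat.rTensor_preserves_injective_linearMap _ P.injective_subtype
    have hmid : TensorProduct.map P.subtype (A.Yc (-2)) y =
        TensorProduct.map (LinearMap.id : V →ₗ[k] V) (A.Yc (-2))
          (A.Yc (-1) v) := by
      rw [← hy', ← LinearMap.comp_apply, ← TensorProduct.map_comp,
        LinearMap.id_comp, LinearMap.comp_id]
    have hy0 : (A.Yc (-2)).lTensor P y = 0 := by
      apply hinj
      show TensorProduct.map P.subtype
          (LinearMap.id : V ⊗[k] V →ₗ[k] V ⊗[k] V)
          (TensorProduct.map (LinearMap.id : P →ₗ[k] P) (A.Yc (-2)) y)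
        = P.subtype.rTensor (V ⊗[k] V) 0
      rw [map_zero, ← LinearMap.comp_apply, ← TensorProduct.map_comp,
        LinearMap.comp_id, LinearMap.id_comp, hmid]
      exact hL0
    have hEx2 : Function.Exact (P.subtype.lTensor P) ((A.Yc (-2)).lTensor P) :=
      Module.Flat.lTensor_exact P (LinearMap.exact_subtype_ker_map (A.Yc (-2)))
    obtain ⟨z, hz⟩ := (hEx2 y).mp hy0
    have hz' : TensorProduct.map (LinearMap.id : P →ₗ[k] P) P.subtype z = y := hz
    refine ⟨z, ?_⟩
    have hsplit : TensorProduct.map P.subtype P.subtype z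
        = TensorProduct.map P.subtype (LinearMap.id : V →ₗ[k] V)
            (TensorProduct.map (LinearMap.id : P →ₗ[k] P) P.subtype z) := by
      rw [← LinearMap.comp_apply, ← TensorProduct.map_comp,
        LinearMap.comp_id, LinearMap.id_comp]
    rw [hsplit, hz', hy']
  exact ⟨hi, hii, hiii⟩
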